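/- Let δ ∈ (0,1) and G_δ the regularized logarithm. For every real symmetric d×d matrix φ, (φ − I) : (I − G_δ'(φ)) ≥ tr(β_δ(φ) + [β_δ(φ)]^{-1} − 2I), where β_δ(s) = max{s,δ}, matrix functions are spectral, and A:B is the Frobenius inner product. -/
import Mathlib


open Matrix BigOperators

/-- Frobenius inner product of two square real matrices. -/
noncomputable def frobInner {n : ℕ} (A B : Matrix (Fin n) (Fin n) ℝ) : ℝ :=
  ∑ i, ∑ j, A i j * B i j

/-- Spectral application of a scalar function: given a decomposition `φ = Oᵀ D O`,
`specApply g O D = Oᵀ g(D) O`. -/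
noncomputable def specApply {n : ℕ} (g : ℝ → ℝ) (O : Matrix (Fin n) (Fin n) ℝ)
    (D : Fin n → ℝ) : Matrix (Fin n) (Fin n) ℝ :=
  Oᵀ * Matrix.diagonal (fun i => g (D i)) * O

/-- The regularized logarithm `G_δ`. -/
noncomputable def Gdelta (δ : ℝ) (s : ℝ) : ℝ :=
  if δ ≤ s then Real.log s else s / δ + Real.log δ - 1

/-- The derivative of the regularized logarithm, `G_δ'(s) = 1 / max{s, δ}`. -/
noncomputable def Gdelta' (δ : ℝ) (s : ℝ) : ℝ := (max s δ)⁻¹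

/-- The scalar cut-off `β_δ(s) = max{s, δ}`. -/
noncomputable def betaDelta (δ : ℝ) (s : ℝ) : ℝ := max s δ

lemma scalar_key (δ s : ℝ) (h0 : 0 < δ) (h1 : δ < 1) :
    max s δ + (max s δ)⁻¹ - 2 ≤ (s - 1) * (1 - (max s δ)⁻¹) := by
  set b := max s δ with hb
  have hbpos : 0 < b := lt_of_lt_of_le h0 (le_max_right _ _)
  have key : (s - 1) * (1 - b⁻¹) - (b + b⁻¹ - 2) = (s - b) * (1 - b⁻¹) := by
    field_simp
    ring
  have h2 : 0 ≤ (s - b) * (1 - b⁻¹) := by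
    rcases le_or_gt δ s with h | h
    · have : b = s := max_eq_left h
      simp [this]
    · have hbδ : b = δ := max_eq_right h.le
      rw [hbδ]
      have h4 : 1 ≤ δ⁻¹ := one_le_inv_iff₀.mpr ⟨h0, h1.le⟩
      nlinarith [mul_nonneg (sub_nonneg.mpr h.le) (sub_nonneg.mpr h4)]
  linarith

lemma frobInner_eq_trace {n : ℕ} (A B : Matrix (Fin n) (Fin n) ℝ) :
    frobInner A B = Matrix.trace (A * Bᵀ) := by
  simp only [frobInner, Matrix.trace, Matrix.diag_apply, Matrix.mul_apply,
    Matrix.transpose_apply]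

lemma trace_conj {d : ℕ} (O M : Matrix (Fin d) (Fin d) ℝ) (hOO : O * Oᵀ = 1) :
    Matrix.trace (Oᵀ * M * O) = Matrix.trace M := by
  rw [Matrix.trace_mul_cycle, hOO, Matrix.one_mul]

theorem stmt11 {d : ℕ} (δ : ℝ) (hδ0 : 0 < δ) (hδ1 : δ < 1)
    (φ O : Matrix (Fin d) (Fin d) ℝ) (D : Fin d → ℝ)
    (hφ : φ.IsSymm) (hO : Oᵀ * O = 1)
    (hdec : φ = Oᵀ * Matrix.diagonal D * O) :
    Matrix.trace (specApply (betaDelta δ) O D + (specApply (betaDelta δ) O D)⁻¹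
        - (2 : ℝ) • (1 : Matrix (Fin d) (Fin d) ℝ)) ≤
      frobInner (φ - 1) (1 - specApply (Gdelta' δ) O D) := by
  have hOO : O * Oᵀ = 1 := mul_eq_one_comm.mp hO
  have hbpos : ∀ i, (0:ℝ) < max (D i) δ :=
    fun i => lt_of_lt_of_le hδ0 (le_max_right _ _)
  -- inverse of specApply betaDelta
  have hinv : (specApply (betaDelta δ) O D)⁻¹ = specApply (Gdelta' δ) O D := by
    apply Matrix.inv_eq_right_inv
    simp only [specApply, betaDelta, Gdelta']
    calc Oᵀ * Matrix.diagonal (fun i => max (D i) δ) * O *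
          (Oᵀ * Matrix.diagonal (fun i => (max (D i) δ)⁻¹) * O)
        = Oᵀ * (Matrix.diagonal (fun i => max (D i) δ) *
            Matrix.diagonal (fun i => (max (D i) δ)⁻¹)) * O := by
          rw [Matrix.mul_assoc (Oᵀ * Matrix.diagonal _), ← Matrix.mul_assoc O,
            ← Matrix.mul_assoc O, hOO, Matrix.one_mul, ← Matrix.mul_assoc,
            Matrix.mul_assoc Oᵀ]
      _ = 1 := by
          rw [Matrix.diagonal_mul_diagonal]
          have h1 : (fun i => max (D i) δ * (max (D i) δ)⁻¹) = fun _ => (1:ℝ) := by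
            funext i
            exact mul_inv_cancel₀ (hbpos i).ne'
          rw [h1, Matrix.diagonal_one, Matrix.mul_one, hO]
  -- symmetry of specApply
  have hSsymm : (specApply (Gdelta' δ) O D)ᵀ = specApply (Gdelta' δ) O D := by
    simp [specApply, Matrix.transpose_mul, Matrix.mul_assoc]
  -- RHS as trace
  have hfrob : frobInner (φ - 1) (1 - specApply (Gdelta' δ) O D) =
      Matrix.trace ((φ - 1) * (1 - specApply (Gdelta' δ) O D)) := by
    rw [frobInner_eq_trace, Matrix.transpose_sub, Matrix.transpose_one, hSsymm]
  -- trace computations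
  have htrφ : Matrix.trace φ = ∑ i, D i := by
    rw [hdec, trace_conj _ _ hOO, Matrix.trace_diagonal]
  have htrS : Matrix.trace (specApply (Gdelta' δ) O D) = ∑ i, (max (D i) δ)⁻¹ := by
    rw [specApply, trace_conj _ _ hOO, Matrix.trace_diagonal]
    rfl
  have htrφS : Matrix.trace (φ * specApply (Gdelta' δ) O D)
      = ∑ i, D i * (max (D i) δ)⁻¹ := by
    rw [hdec, specApply]
    have : Oᵀ * Matrix.diagonal D * O * (Oᵀ * Matrix.diagonal (fun i => Gdelta' δ (D i)) * O)
        = Oᵀ * (Matrix.diagonal D * Matrix.diagonal (fun i => Gdelta' δ (D i))) * O := by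
      rw [Matrix.mul_assoc (Oᵀ * Matrix.diagonal D), ← Matrix.mul_assoc O,
        ← Matrix.mul_assoc O, hOO, Matrix.one_mul, ← Matrix.mul_assoc,
        Matrix.mul_assoc Oᵀ]
    rw [this, trace_conj _ _ hOO, Matrix.diagonal_mul_diagonal, Matrix.trace_diagonal]
    rfl
  have htrB : Matrix.trace (specApply (betaDelta δ) O D) = ∑ i, max (D i) δ := by
    rw [specApply, trace_conj _ _ hOO, Matrix.trace_diagonal]
    rfl
  have hRHS : frobInner (φ - 1) (1 - specApply (Gdelta' δ) O D)
      = ∑ i, (D i - 1) * (1 - (max (D i) δ)⁻¹) := by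
    rw [hfrob]
    simp only [Matrix.sub_mul, Matrix.mul_sub, Matrix.mul_one, Matrix.one_mul,
      Matrix.trace_sub]
    rw [htrφ, htrS, htrφS, Matrix.trace_one, Fintype.card_fin]
    have hcard : ((d:ℕ) : ℝ) = ∑ _i : Fin d, (1:ℝ) := by simp
    rw [hcard, ← Finset.sum_sub_distrib, ← Finset.sum_sub_distrib,
      ← Finset.sum_sub_distrib]
    exact Finset.sum_congr rfl fun i _ => by ring
  have hLHS : Matrix.trace (specApply (betaDelta δ) O D + (specApply (betaDelta δ) O D)⁻¹
        - (2 : ℝ) • (1 : Matrix (Fin d) (Fin d) ℝ))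
      = ∑ i, (max (D i) δ + (max (D i) δ)⁻¹ - 2) := by
    rw [Matrix.trace_sub, Matrix.trace_add, hinv, htrB, htrS, Matrix.trace_smul,
      Matrix.trace_one, ← Finset.sum_add_distrib]
    have hcard : ((2:ℝ) • (Fintype.card (Fin d) : ℝ)) = ∑ _i : Fin d, (2:ℝ) := by
      simp [mul_comm]
    rw [hcard, ← Finset.sum_sub_distrib]
  rw [hLHS, hRHS]
  exact Finset.sum_le_sum fun i _ => scalar_key δ (D i) hδ0 hδ1
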